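/- There exists a constant ε₀ > 0 such that the following holds for every ε ∈ (0, ε₀]. Let I be a finite set of items where each item i has profit p(i) ≥ 0 and weight w(i) ≥ 0, with p(i) = 0 whenever w(i) = 0, p(i) < 2/3 − 6ε for every i ∈ I, and p(i) ≥ ε whenever w(i) ≥ 1 − ε². Let T ⊆ I be a set of heavy items, and define label weights w̃ for heavy and light-expensive items as in the context. Let H*_1, …, H*_m ⊆ I be sets of heavy items with |H*_j| ≤ 1 for every j. Suppose there exists a slack feasible solution (J_1, …, J_m) such that: p(J_j) ≥ 2/3 − 2ε for every j; for every j, if J_j contains a critical heavy item h then T(h) ≠ ∅ and w(J_j) − w(h) ≤ (1 − ε)(1 − w̃(h)); and for every j the set of critical heavy items in J_j is exactly H*_j. Then there exists a feasible solution (I_1, …, I_m) satisfying: (i) p(I_j) ≥ 2/3 − 3ε for every j; (ii) for every j, the set of critical heavy items in I_j is exactly H*_j; (iii) for every j with |I_j| ≥ 3, w(I_j) − w(L*_j) + w̃(L*_j) − w(H*_j) + w̃(H*_j) ≤ 1, where L*_j is the set of critical light items in I_j and w̃ is extended additively to sets; (iv) there is no critical light-expensive item e and non-critical light-expensive item e′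 of the same type with w(e) < w(e′). -/

import Mathlib

open scoped Classical

universe u

variable {ι : Type u}

/-- An item is heavy if its weight is at least `1 - ε²`. -/
def Heavy (ε : ℝ) (w : ι → ℝ) (i : ι) : Prop := 1 - ε ^ 2 ≤ w i

/-- An item is expensive if its profit is at least `ε`. -/
def Expensive (ε : ℝ) (p : ι → ℝ) (i : ι) : Prop := ε ≤ p i

/-- A solution is slack if for every knapsack with at least three items exactly one
of the following holds: (i) all its items are light and its weight is at most
`1 - ε³`; (ii) it contains a heavy item `h` and `w(A j) - w h ≤ (1 - ε)(1 - w h)`. -/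
def Slack (ε : ℝ) {m : ℕ} (w : ι → ℝ) (A : Fin m → Finset ι) : Prop :=
  ∀ j, 3 ≤ (A j).card →
    Xor' ((∀ i ∈ A j, ¬ Heavy ε w i) ∧ ∑ i ∈ A j, w i ≤ 1 - ε ^ 3)
      (∃ h ∈ A j, Heavy ε w h ∧ (∑ i ∈ A j, w i) - w h ≤ (1 - ε) * (1 - w h))

/-- `T(h)` for a heavy item `h`: elements of the profile `T` with the same rounded
profit as `h` and weight at least `w h`. -/
noncomputable def TSet (ε : ℝ) (p w : ι → ℝ) (T : Finset ι) (h : ι) : Finset ι :=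
  T.filter (fun t => ⌊p t / ε⌋ = ⌊p h / ε⌋ ∧ w h ≤ w t)

/-- The label weight `w̃(h)` of a heavy item: the minimum weight of an element of
`T(h)` (via `sInf`; irrelevant when `T(h) = ∅`). -/
noncomputable def labelW (ε : ℝ) (p w : ι → ℝ) (T : Finset ι) (h : ι) : ℝ :=
  sInf {x : ℝ | ∃ t ∈ TSet ε p w T h, w t = x}

/-- The scaling factor `W(e)` for a light-expensive item `e`: if
`T′(e) = {t ∈ T : w e ≤ 1 - w t}` is nonempty then `ε · (1 - max{w t : t ∈ T′(e)})`,
otherwise `ε³`. -/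
noncomputable def Wfac (ε : ℝ) (w : ι → ℝ) (T : Finset ι) (e : ι) : ℝ :=
  if (T.filter (fun t => w e ≤ 1 - w t)).Nonempty then
    ε * (1 - sSup {x : ℝ | ∃ t ∈ T.filter (fun t => w e ≤ 1 - w t), w t = x})
  else ε ^ 3

/-- The label weight of a light-expensive item:
`w̃(e) = ⌈w e / (ε · W(e))⌉ · ε · W(e)`. -/
noncomputable def labelWLight (ε : ℝ) (w : ι → ℝ) (T : Finset ι) (e : ι) : ℝ :=
  (⌈w e / (ε * Wfac ε w T e)⌉ : ℝ) * (ε * Wfac ε w T e)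

/-- The label profit of a light-expensive item: `p̃(e) = ⌊p e / ε²⌋ · ε²`. -/
noncomputable def labelPLight (ε : ℝ) (p : ι → ℝ) (e : ι) : ℝ :=
  (⌊p e / ε ^ 2⌋ : ℝ) * ε ^ 2

/-- Two light-expensive items have the same type if they have equal label weights
and equal label profits. -/
def SameTypeLight (ε : ℝ) (p w : ι → ℝ) (T : Finset ι) (e₁ e₂ : ι) : Prop :=
  labelWLight ε w T e₁ = labelWLight ε w T e₂ ∧
    labelPLight ε p e₁ = labelPLight ε p e₂

/-- An item is critical in a solution if it is heavy or expensive and lies in a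
knapsack with at least three items. -/
def Critical (ε : ℝ) (p w : ι → ℝ) {m : ℕ} (A : Fin m → Finset ι) (i : ι) : Prop :=
  (Heavy ε w i ∨ Expensive ε p i) ∧ ∃ j, i ∈ A j ∧ 3 ≤ (A j).card

/-!
Start from `J`. In a knapsack with at least three items keep the items that are not
light-expensive, only as many light-expensive items as are needed for profit `2/3 - 2ε`, and pad
to three items. At most `2/(3ε)` light-expensive items remain, so rounding their profits down to
multiples of `ε²` costs at most `ε`, and rounding their weights up to multiples of `ε W(e)` costs
at most `ε` times the room left next to the heavy item `h` (or `ε³` in an all-light knapsack),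
which `w(J_j) - w(h) ≤ (1 - ε)(1 - w̃(h))` and the slack condition absorb.

Among the solutions satisfying these rounded constraints take one maximizing the weight of its
critical light-expensive items. Swapping a critical light-expensive item with a heavier
non-critical one of the same type preserves every rounded constraint, since these only see the
type, and it lightens the knapsack (of at most two items) that receives the lighter item; so no
such pair exists.
-/

open Finset

/-- A minimal subset reaching `θ`: dropping any of its elements (each worth at least `ε`)
falls below `θ`, which bounds its size. -/
lemma exists_subset_le_sum_card_lt {α : Type*} {E : Finset α} {f : α → ℝ} {ε θ : ℝ}
    (hE : ∀ e ∈ E, ε ≤ f e) (hθ : θ ≤ ∑ e ∈ E, f e) :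
    ∃ S ⊆ E, θ ≤ ∑ e ∈ S, f e ∧ (S = ∅ ∨ (#S - 1 : ℝ) * ε < θ) := by
  obtain ⟨S, hS, hmin⟩ := exists_min_image (E.powerset.filter fun S => θ ≤ ∑ e ∈ S, f e) card
    ⟨E, mem_filter.mpr ⟨mem_powerset_self E, hθ⟩⟩
  obtain ⟨hSE, hSθ⟩ := mem_filter.mp hS
  rw [mem_powerset] at hSE
  refine ⟨S, hSE, hSθ, S.eq_empty_or_nonempty.imp_right fun ⟨s, hs⟩ => ?_⟩
  have hlt : ∑ e ∈ S.erase s, f e < θ := by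
    by_contra! h
    have := hmin (S.erase s) (mem_filter.mpr ⟨mem_powerset.mpr ((erase_subset s S).trans hSE), h⟩)
    have := card_erase_lt_of_mem hs
    omega
  have hcard : #(S.erase s) • ε ≤ ∑ e ∈ S.erase s, f e :=
    card_nsmul_le_sum _ f ε fun e he => hE e (hSE (mem_of_mem_erase he))
  rw [nsmul_eq_mul, cast_card_erase_of_mem hs] at hcard
  linarith

lemma exists_subsuperset_le_card {α : Type*} {s t : Finset α} {n : ℕ} (hst : s ⊆ t)
    (ht : n ≤ #t) : ∃ u, s ⊆ u ∧ u ⊆ t ∧ n ≤ #u ∧ (u = s ∨ #u = n) := by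
  rcases le_or_gt n #s with h | h
  · exact ⟨s, subset_rfl, hst, h, Or.inl rfl⟩
  · obtain ⟨u, hsu, hut, hu⟩ := exists_subsuperset_card_eq hst h.le ht
    exact ⟨u, hsu, hut, hu.ge, Or.inr hu⟩

section Swap

variable {α β : Type*} [DecidableEq α] {B : Finset α} {a b : α}

lemma mem_map_swap_of_ne {i : α} (ha : i ≠ a) (hb : i ≠ b) :
    i ∈ B.map (Equiv.swap a b).toEmbedding ↔ i ∈ B := by
  rw [mem_map_equiv, Equiv.symm_swap, Equiv.swap_apply_of_ne_of_ne ha hb]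

lemma map_swap_subset {I : Finset α} (hB : B ⊆ I) (ha : a ∈ I) (hb : b ∈ I) :
    B.map (Equiv.swap a b).toEmbedding ⊆ I := by
  intro i hi
  rcases eq_or_ne i a with rfl | hia
  · exact ha
  rcases eq_or_ne i b with rfl | hib
  · exact hb
  exact hB ((mem_map_swap_of_ne hia hib).mp hi)

lemma sum_map_swap_of_eq [AddCommMonoid β] {f : α → β} (h : f a = f b) :
    ∑ i ∈ B.map (Equiv.swap a b).toEmbedding, f i = ∑ i ∈ B, f i := by
  rw [sum_map]
  exact sum_congr rfl fun i _ => Equiv.apply_swap_eq_self h i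

lemma apply_swap_le [Preorder β] {f : α → β} {i : α} (h : f a ≤ f b) (hi : i ≠ a) :
    f (Equiv.swap a b i) ≤ f i := by
  rcases eq_or_ne i b with rfl | hib
  · rwa [Equiv.swap_apply_right]
  · rw [Equiv.swap_apply_of_ne_of_ne hi hib]

lemma le_apply_swap [Preorder β] {f : α → β} {i : α} (h : f a ≤ f b) (hi : i ≠ b) :
    f i ≤ f (Equiv.swap a b i) := by
  rcases eq_or_ne i a with rfl | hia
  · rwa [Equiv.swap_apply_left]
  · rw [Equiv.swap_apply_of_ne_of_ne hia hi]

variable [AddCommMonoid β] [PartialOrder β] {f : α → β}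

lemma sum_map_swap_le [IsOrderedAddMonoid β] (ha : a ∉ B) (h : f a ≤ f b) :
    ∑ i ∈ B.map (Equiv.swap a b).toEmbedding, f i ≤ ∑ i ∈ B, f i := by
  rw [sum_map]
  exact sum_le_sum fun i hi => apply_swap_le h (ne_of_mem_of_not_mem hi ha)

lemma sum_le_sum_map_swap [IsOrderedAddMonoid β] (hb : b ∉ B) (h : f a ≤ f b) :
    ∑ i ∈ B, f i ≤ ∑ i ∈ B.map (Equiv.swap a b).toEmbedding, f i := by
  rw [sum_map]
  exact sum_le_sum fun i hi => le_apply_swap h (ne_of_mem_of_not_mem hi hb)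

lemma sum_lt_sum_map_swap [IsOrderedCancelAddMonoid β] (ha : a ∈ B) (hb : b ∉ B)
    (h : f a < f b) : ∑ i ∈ B, f i < ∑ i ∈ B.map (Equiv.swap a b).toEmbedding, f i := by
  rw [sum_map]
  exact sum_lt_sum (fun i hi => le_apply_swap h.le (ne_of_mem_of_not_mem hi hb))
    ⟨a, ha, by simpa using h⟩

end Swap

section Labels

variable {ε : ℝ} {p w : ι → ℝ} {T : Finset ι}

lemma le_labelW {h : ι} (hne : (TSet ε p w T h).Nonempty) : w h ≤ labelW ε p w T h := by
  obtain ⟨t, ht⟩ := hne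
  exact le_csInf ⟨w t, t, ht, rfl⟩ (by rintro _ ⟨s, hs, rfl⟩; exact (mem_filter.mp hs).2.2)

lemma exists_mem_weight_eq_labelW {h : ι} (hne : (TSet ε p w T h).Nonempty) :
    ∃ t ∈ T, w t = labelW ε p w T h := by
  obtain ⟨t, ht, hwt⟩ : sInf (w '' ↑(TSet ε p w T h)) ∈ w '' ↑(TSet ε p w T h) :=
    ((coe_nonempty.mpr hne).image w).csInf_mem ((TSet ε p w T h).finite_toSet.image w)
  exact ⟨t, (mem_filter.mp ht).1, hwt⟩

lemma Wfac_pos (hε : 0 < ε) {e : ι} (hwe : 0 < w e) : 0 < Wfac ε w T e := by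
  unfold Wfac
  split_ifs with hne
  · obtain ⟨t, ht⟩ := hne
    have : sSup {x : ℝ | ∃ t ∈ T.filter (fun t => w e ≤ 1 - w t), w t = x} ≤ 1 - w e :=
      csSup_le ⟨w t, t, ht, rfl⟩ (by rintro _ ⟨s, hs, rfl⟩; linarith [(mem_filter.mp hs).2])
    exact mul_pos hε (by linarith)
  · positivity

lemma Wfac_le_of_mem (hε : 0 < ε) {e t : ι} (ht : t ∈ T) (hwt : w e ≤ 1 - w t) :
    Wfac ε w T e ≤ ε * (1 - w t) := by
  have hmem : t ∈ T.filter (fun t => w e ≤ 1 - w t) := mem_filter.mpr ⟨ht, hwt⟩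
  have hsup : w t ≤ sSup {x : ℝ | ∃ t ∈ T.filter (fun t => w e ≤ 1 - w t), w t = x} :=
    le_csSup ((T.filter _).finite_toSet.image w).bddAbove ⟨t, hmem, rfl⟩
  rw [Wfac, if_pos ⟨t, hmem⟩]
  exact mul_le_mul_of_nonneg_left (by linarith) hε.le

lemma Wfac_le_pow_three (hε : 0 < ε) (hT : ∀ t ∈ T, Heavy ε w t) (e : ι) :
    Wfac ε w T e ≤ ε ^ 3 := by
  by_cases hne : (T.filter (fun t => w e ≤ 1 - w t)).Nonempty
  · obtain ⟨t, ht⟩ := hne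
    obtain ⟨htT, hwt⟩ := mem_filter.mp ht
    calc Wfac ε w T e ≤ ε * (1 - w t) := Wfac_le_of_mem hε htT hwt
      _ ≤ ε * ε ^ 2 :=
        mul_le_mul_of_nonneg_left (by linarith [show 1 - ε ^ 2 ≤ w t from hT t htT]) hε.le
      _ = ε ^ 3 := by ring
  · rw [Wfac, if_neg hne]

lemma le_labelWLight (hε : 0 < ε) {e : ι} (hwe : 0 < w e) : w e ≤ labelWLight ε w T e :=
  (div_le_iff₀ (mul_pos hε (Wfac_pos hε hwe))).mp (Int.le_ceil _)

lemma labelWLight_le (hε : 0 < ε) {e : ι} (hwe : 0 < w e) :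
    labelWLight ε w T e ≤ w e + ε * Wfac ε w T e := by
  have hy := mul_pos hε (Wfac_pos (T := T) hε hwe)
  have := (lt_div_iff₀ hy).mp
    (sub_lt_iff_lt_add.mpr (Int.ceil_lt_add_one (w e / (ε * Wfac ε w T e))))
  unfold labelWLight
  nlinarith

lemma labelPLight_le (hε : 0 < ε) (e : ι) : labelPLight ε p e ≤ p e :=
  (le_div_iff₀ (by positivity)).mp (Int.floor_le _)

lemma sub_le_labelPLight (hε : 0 < ε) (e : ι) : p e - ε ^ 2 ≤ labelPLight ε p e := by
  have := (div_lt_iff₀ (by positivity : (0 : ℝ) < ε ^ 2)).mp (Int.lt_floor_add_one (p e / ε ^ 2))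
  unfold labelPLight
  nlinarith

end Labels

def LightExpensive (ε : ℝ) (p w : ι → ℝ) (i : ι) : Prop := ¬ Heavy ε w i ∧ Expensive ε p i

noncomputable def roundedWeight (ε : ℝ) (p w : ι → ℝ) (T : Finset ι) (i : ι) : ℝ :=
  if LightExpensive ε p w i then labelWLight ε w T i else w i

noncomputable def roundedProfit (ε : ℝ) (p w : ι → ℝ) (i : ι) : ℝ :=
  if LightExpensive ε p w i then labelPLight ε p i else p i

section Rounded

variable {ε : ℝ} {p w : ι → ℝ} {T : Finset ι}

lemma sum_roundedWeight_eq (B : Finset ι) :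
    ∑ i ∈ B, roundedWeight ε p w T i = ∑ i ∈ B, w i
      - ∑ i ∈ B.filter (fun i => ¬ Heavy ε w i ∧ Expensive ε p i), w i
      + ∑ i ∈ B.filter (fun i => ¬ Heavy ε w i ∧ Expensive ε p i), labelWLight ε w T i := by
  rw [← sum_filter_add_sum_filter_not B (fun i => ¬ Heavy ε w i ∧ Expensive ε p i) w,
    ← sum_filter_add_sum_filter_not B (fun i => ¬ Heavy ε w i ∧ Expensive ε p i)]
  have hle : ∑ i ∈ B.filter (fun i => ¬ Heavy ε w i ∧ Expensive ε p i), roundedWeight ε p w T i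
      = ∑ i ∈ B.filter (fun i => ¬ Heavy ε w i ∧ Expensive ε p i), labelWLight ε w T i :=
    sum_congr rfl fun i hi => if_pos (mem_filter.mp hi).2
  have hnot : ∑ i ∈ B.filter (fun i => ¬ (¬ Heavy ε w i ∧ Expensive ε p i)),
      roundedWeight ε p w T i
      = ∑ i ∈ B.filter (fun i => ¬ (¬ Heavy ε w i ∧ Expensive ε p i)), w i :=
    sum_congr rfl fun i hi => if_neg (mem_filter.mp hi).2
  rw [hle, hnot]
  ring

lemma le_roundedWeight (hε : 0 < ε) {i : ι} (hi : LightExpensive ε p w i → 0 < w i) :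
    w i ≤ roundedWeight ε p w T i := by
  unfold roundedWeight
  split_ifs with h
  · exact le_labelWLight hε (hi h)
  · exact le_rfl

lemma roundedProfit_le (hε : 0 < ε) (i : ι) : roundedProfit ε p w i ≤ p i := by
  unfold roundedProfit
  split_ifs
  · exact labelPLight_le hε i
  · exact le_rfl

lemma sum_roundedWeight_le {B : Finset ι} {c : ℝ} (hε : 0 < ε)
    (hpos : ∀ i ∈ B, LightExpensive ε p w i → 0 < w i)
    (hW : ∀ i ∈ B, LightExpensive ε p w i → Wfac ε w T i ≤ c) :
    ∑ i ∈ B, roundedWeight ε p w T i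
      ≤ ∑ i ∈ B, w i + #(B.filter (LightExpensive ε p w)) * (ε * c) := by
  calc ∑ i ∈ B, roundedWeight ε p w T i
      ≤ ∑ i ∈ B, (w i + if LightExpensive ε p w i then ε * c else 0) := by
        refine sum_le_sum fun i hi => ?_
        unfold roundedWeight
        split_ifs with h
        · linarith [labelWLight_le (T := T) hε (hpos i hi h),
            mul_le_mul_of_nonneg_left (hW i hi h) hε.le]
        · simp
    _ = _ := by rw [sum_add_distrib, ← sum_filter, sum_const, nsmul_eq_mul]

lemma sum_sub_le_sum_roundedProfit (hε : 0 < ε) (B : Finset ι) :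
    ∑ i ∈ B, p i - #(B.filter (LightExpensive ε p w)) * ε ^ 2
      ≤ ∑ i ∈ B, roundedProfit ε p w i := by
  calc _ = ∑ i ∈ B, (p i - if LightExpensive ε p w i then ε ^ 2 else 0) := by
        rw [sum_sub_distrib, ← sum_filter, sum_const, nsmul_eq_mul]
    _ ≤ _ := sum_le_sum fun i _ => by
        unfold roundedProfit
        split_ifs
        · linarith [sub_le_labelPLight (p := p) hε i]
        · simp

end Rounded

/-- The invariant of the exchange argument. Apart from the weight of a knapsack with at most
two items, it depends on a light-expensive item only through its type. -/
structure IsGoodKnapsack (ε : ℝ) (p w : ι → ℝ) (T H B : Finset ι) : Prop where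
  sum_weight_le_of_card_le_two : #B ≤ 2 → ∑ i ∈ B, w i ≤ 1
  sum_roundedWeight_le : 3 ≤ #B →
    ∑ i ∈ B, roundedWeight ε p w T i - ∑ i ∈ H, w i + ∑ i ∈ H, labelW ε p w T i ≤ 1
  mem_iff : ∀ i, i ∈ H ↔ i ∈ B ∧ Heavy ε w i ∧ 3 ≤ #B
  le_sum_roundedProfit : 2 / 3 - 3 * ε ≤ ∑ i ∈ B, roundedProfit ε p w i

structure IsGoodSolution (ε : ℝ) (p w : ι → ℝ) (T I : Finset ι) {m : ℕ}
    (H A : Fin m → Finset ι) : Prop where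
  subset : ∀ j, A j ⊆ I
  disjoint : ∀ j j', j ≠ j' → Disjoint (A j) (A j')
  knapsack : ∀ j, IsGoodKnapsack ε p w T (H j) (A j)

noncomputable def criticalLightWeight (ε : ℝ) (p w : ι → ℝ) (B : Finset ι) : ℝ :=
  if 3 ≤ #B then ∑ i ∈ B, if LightExpensive ε p w i then w i else 0 else 0

section Exchange

variable {ε : ℝ} {p w : ι → ℝ} {T I B : Finset ι} {e e' : ι}

namespace IsGoodKnapsack

variable {H : Finset ι}

lemma sum_weight_le (hB : IsGoodKnapsack ε p w T H B) (hε : 0 < ε)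
    (hpos : ∀ i ∈ B, LightExpensive ε p w i → 0 < w i)
    (hH : ∀ h ∈ H, w h ≤ labelW ε p w T h) : ∑ i ∈ B, w i ≤ 1 := by
  rcases le_or_gt #B 2 with hsmall | hlarge
  · exact hB.sum_weight_le_of_card_le_two hsmall
  · have hround := hB.sum_roundedWeight_le hlarge
    have hBw := sum_le_sum fun i hi => le_roundedWeight (T := T) hε (hpos i hi)
    have hHw := sum_le_sum hH
    linarith

lemma le_sum_profit (hB : IsGoodKnapsack ε p w T H B) (hε : 0 < ε) :
    2 / 3 - 3 * ε ≤ ∑ i ∈ B, p i :=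
  hB.le_sum_roundedProfit.trans (sum_le_sum fun i _ => roundedProfit_le hε i)

lemma map_swap (hB : IsGoodKnapsack ε p w T H B) (he : LightExpensive ε p w e)
    (he' : LightExpensive ε p w e') (htype : SameTypeLight ε p w T e e') (hw : w e ≤ w e')
    (hsmall : #B ≤ 2 → e ∉ B) :
    IsGoodKnapsack ε p w T H (B.map (Equiv.swap e e').toEmbedding) where
  sum_weight_le_of_card_le_two h := by
    rw [card_map] at h
    exact (sum_map_swap_le (hsmall h) hw).trans (hB.sum_weight_le_of_card_le_two h)
  sum_roundedWeight_le h := by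
    rw [card_map] at h
    rw [sum_map_swap_of_eq (by simp only [roundedWeight, if_pos he, if_pos he', htype.1])]
    exact hB.sum_roundedWeight_le h
  mem_iff i := by
    rw [card_map, hB.mem_iff]
    by_cases hi : Heavy ε w i
    · rw [mem_map_swap_of_ne (fun h : i = e => he.1 (h ▸ hi)) (fun h : i = e' => he'.1 (h ▸ hi))]
    · simp [hi]
  le_sum_roundedProfit := by
    rw [sum_map_swap_of_eq (by simp only [roundedProfit, if_pos he, if_pos he', htype.2])]
    exact hB.le_sum_roundedProfit

end IsGoodKnapsack

lemma criticalLightWeight_le_map_swap (he : LightExpensive ε p w e)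
    (he' : LightExpensive ε p w e') (hw : w e ≤ w e') (he'B : 3 ≤ #B → e' ∉ B) :
    criticalLightWeight ε p w B
      ≤ criticalLightWeight ε p w (B.map (Equiv.swap e e').toEmbedding) := by
  unfold criticalLightWeight
  rw [card_map]
  split_ifs with h3
  · exact sum_le_sum_map_swap (he'B h3) (by simpa only [if_pos he, if_pos he'] using hw)
  · exact le_rfl

lemma criticalLightWeight_lt_map_swap (he : LightExpensive ε p w e)
    (he' : LightExpensive ε p w e') (hw : w e < w e') (heB : e ∈ B) (hB : 3 ≤ #B)
    (he'B : e' ∉ B) :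
    criticalLightWeight ε p w B
      < criticalLightWeight ε p w (B.map (Equiv.swap e e').toEmbedding) := by
  unfold criticalLightWeight
  rw [card_map, if_pos hB, if_pos hB]
  exact sum_lt_sum_map_swap heB he'B (by simpa only [if_pos he, if_pos he'] using hw)

namespace IsGoodSolution

variable {m : ℕ} {H A : Fin m → Finset ι}

lemma map_swap (hA : IsGoodSolution ε p w T I H A) (heI : e ∈ I) (he'I : e' ∈ I)
    (he : LightExpensive ε p w e) (he' : LightExpensive ε p w e')
    (htype : SameTypeLight ε p w T e e') (hw : w e ≤ w e')
    (hsmall : ∀ j, e ∈ A j → 3 ≤ #(A j)) :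
    IsGoodSolution ε p w T I H (fun j => (A j).map (Equiv.swap e e').toEmbedding) where
  subset j := map_swap_subset (hA.subset j) heI he'I
  disjoint j j' h := (disjoint_map _).mpr (hA.disjoint j j' h)
  knapsack j := (hA.knapsack j).map_swap he he' htype hw fun hcard hej => by
    have := hsmall j hej
    omega

lemma setOf_finite (ε : ℝ) (p w : ι → ℝ) (T I : Finset ι) (H : Fin m → Finset ι) :
    {A : Fin m → Finset ι | IsGoodSolution ε p w T I H A}.Finite :=
  (Set.Finite.pi fun _ => I.powerset.finite_toSet).subset fun _ hA =>
    Set.mem_pi.mpr fun j _ => mem_coe.mpr (mem_powerset.mpr (hA.subset j))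

lemma not_exists_critical_lighter (hA : IsGoodSolution ε p w T I H A)
    (hmax : ∀ A', IsGoodSolution ε p w T I H A' →
      ∑ j, criticalLightWeight ε p w (A' j) ≤ ∑ j, criticalLightWeight ε p w (A j)) :
    ¬ ∃ e e', (¬ Heavy ε w e ∧ Expensive ε p e) ∧ Critical ε p w A e ∧
      e' ∈ I ∧ (¬ Heavy ε w e' ∧ Expensive ε p e') ∧ ¬ Critical ε p w A e' ∧
      SameTypeLight ε p w T e e' ∧ w e < w e' := by
  rintro ⟨e, e', he, ⟨-, j₀, hej₀, hj₀⟩, he'I, he', he'nc, htype, hw⟩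
  have hsmall : ∀ j, e ∈ A j → 3 ≤ #(A j) := fun j hej => by
    rcases eq_or_ne j j₀ with rfl | hj
    · exact hj₀
    · exact absurd hej₀ (disjoint_left.mp (hA.disjoint j j₀ hj) hej)
  have he'large : ∀ j, 3 ≤ #(A j) → e' ∉ A j := fun j h3 he'j =>
    he'nc ⟨Or.inr he'.2, j, he'j, h3⟩
  have hlt : ∑ j, criticalLightWeight ε p w (A j)
      < ∑ j, criticalLightWeight ε p w ((A j).map (Equiv.swap e e').toEmbedding) :=
    sum_lt_sum (fun j _ => criticalLightWeight_le_map_swap he he' hw.le (he'large j))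
      ⟨j₀, mem_univ _, criticalLightWeight_lt_map_swap he he' hw hej₀ hj₀ (he'large j₀ hj₀)⟩
  exact (hmax _ (hA.map_swap (hA.subset j₀ hej₀) he'I he he' htype hw.le hsmall)).not_gt hlt

end IsGoodSolution

end Exchange

section Construction

variable {ε : ℝ} {p w : ι → ℝ} {T : Finset ι}

/-- Keep every item that is not light-expensive, add light-expensive items until the profit
reaches `2/3 - 2ε`, and pad up to three items. -/
lemma exists_profitable_subset (hε : 0 < ε) (hε9 : ε ≤ 1 / 9) {J : Finset ι}
    (hp0 : ∀ i ∈ J, 0 ≤ p i) (hJ : 3 ≤ #J) (hJp : 2 / 3 - 2 * ε ≤ ∑ i ∈ J, p i) :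
    ∃ B ⊆ J, 3 ≤ #B ∧ (∀ i ∈ J, ¬ LightExpensive ε p w i → i ∈ B) ∧
      2 / 3 - 2 * ε ≤ ∑ i ∈ B, p i ∧ #(B.filter (LightExpensive ε p w)) * ε ≤ 2 / 3 := by
  set N := J.filter fun i => ¬ LightExpensive ε p w i
  have hN : 0 ≤ ∑ i ∈ N, p i := sum_nonneg fun i hi => hp0 i (mem_filter.mp hi).1
  obtain ⟨S, hSE, hSp, hS⟩ := exists_subset_le_sum_card_lt
    (E := J.filter (LightExpensive ε p w)) (f := p) (ε := ε) (θ := 2 / 3 - 2 * ε - ∑ i ∈ N, p i)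
    (fun e he => (mem_filter.mp he).2.2)
    (by linarith [sum_filter_add_sum_filter_not J (LightExpensive ε p w) p])
  have hNS : Disjoint N S :=
    (disjoint_filter_filter_not J J (LightExpensive ε p w)).symm.mono_right hSE
  have hNSJ : N ∪ S ⊆ J := union_subset (filter_subset _ J) (hSE.trans (filter_subset _ J))
  obtain ⟨B, hB₀, hBJ, hB3, hB⟩ := exists_subsuperset_le_card hNSJ hJ
  refine ⟨B, hBJ, hB3, fun i hi hni => hB₀ (mem_union_left _ (mem_filter.mpr ⟨hi, hni⟩)), ?_, ?_⟩
  · calc 2 / 3 - 2 * ε ≤ ∑ i ∈ N ∪ S, p i := by rw [sum_union hNS]; linarith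
      _ ≤ ∑ i ∈ B, p i :=
        sum_le_sum_of_subset_of_nonneg hB₀ fun i hi _ => hp0 i (hBJ hi)
  · rcases hB with rfl | h3
    · have hLE : (N ∪ S).filter (LightExpensive ε p w) ⊆ S := fun i hi => by
        obtain ⟨hi, hie⟩ := mem_filter.mp hi
        exact (mem_union.mp hi).resolve_left fun hiN => (mem_filter.mp hiN).2 hie
      have hcard : (#((N ∪ S).filter (LightExpensive ε p w)) : ℝ) ≤ #S := by
        exact_mod_cast card_le_card hLE
      rcases hS with rfl | hS
      · simp only [card_empty, Nat.cast_zero] at hcard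
        nlinarith
      · nlinarith
    · have hcard : (#(B.filter (LightExpensive ε p w)) : ℝ) ≤ 3 := by
        exact_mod_cast h3 ▸ card_filter_le B _
      nlinarith

lemma sum_roundedWeight_le_of_light (hε : 0 < ε) (hT : ∀ t ∈ T, Heavy ε w t) {B : Finset ι}
    (hpos : ∀ i ∈ B, LightExpensive ε p w i → 0 < w i)
    (hk : #(B.filter (LightExpensive ε p w)) * ε ≤ 1) (hB : ∑ i ∈ B, w i ≤ 1 - ε ^ 3) :
    ∑ i ∈ B, roundedWeight ε p w T i ≤ 1 := by
  have hround := sum_roundedWeight_le hε hpos fun i _ _ => Wfac_le_pow_three hε hT i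
  have hextra : #(B.filter (LightExpensive ε p w)) * (ε * ε ^ 3) ≤ ε ^ 3 := by
    calc _ = #(B.filter (LightExpensive ε p w)) * ε * ε ^ 3 := by ring
      _ ≤ 1 * ε ^ 3 := by gcongr
      _ = ε ^ 3 := one_mul _
  linarith

/-- Every light-expensive item of `B` fits next to `h`, hence next to the element of `T(h)`
realizing `w̃(h)`; this bounds its rounding error by `ε² (1 - w̃(h))`. -/
lemma sum_roundedWeight_le_of_heavy (hε : 0 < ε) (hε1 : ε < 1) {B J : Finset ι} {h : ι}
    (hBJ : B ⊆ J) (hhB : h ∈ B) (hh : Heavy ε w h) (hw0 : ∀ i ∈ J, 0 ≤ w i)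
    (hpos : ∀ i ∈ B, LightExpensive ε p w i → 0 < w i)
    (hk : #(B.filter (LightExpensive ε p w)) * ε ≤ 1) (hne : (TSet ε p w T h).Nonempty)
    (hJ : ∑ i ∈ J, w i - w h ≤ (1 - ε) * (1 - labelW ε p w T h)) :
    ∑ i ∈ B, roundedWeight ε p w T i - w h + labelW ε p w T h ≤ 1 := by
  obtain ⟨t, htT, hwt⟩ := exists_mem_weight_eq_labelW hne
  have hhJ := hBJ hhB
  have hrest : ∀ i ∈ J, i ≠ h → w i ≤ ∑ i ∈ J, w i - w h := fun i hi hih => by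
    rw [← sum_erase_eq_sub hhJ]
    exact single_le_sum (fun x hx => hw0 x (mem_of_mem_erase hx)) (mem_erase.mpr ⟨hih, hi⟩)
  have hJh : 0 ≤ ∑ i ∈ J, w i - w h := by
    rw [← sum_erase_eq_sub hhJ]
    exact sum_nonneg fun x hx => hw0 x (mem_of_mem_erase hx)
  have hgap : 0 ≤ 1 - labelW ε p w T h := nonneg_of_mul_nonneg_right (hJh.trans hJ) (by linarith)
  have hW : ∀ i ∈ B, LightExpensive ε p w i → Wfac ε w T i ≤ ε * (1 - labelW ε p w T h) :=
    fun i hi hie => hwt ▸ Wfac_le_of_mem hε htT (by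
      have := hrest i (hBJ hi) fun hih => hie.1 (hih ▸ hh)
      nlinarith)
  have hround := sum_roundedWeight_le hε hpos hW
  have hBJw : ∑ i ∈ B, w i ≤ ∑ i ∈ J, w i :=
    sum_le_sum_of_subset_of_nonneg hBJ fun i hi _ => hw0 i hi
  have hextra : #(B.filter (LightExpensive ε p w)) * (ε * (ε * (1 - labelW ε p w T h)))
      ≤ ε * (1 - labelW ε p w T h) := by
    calc _ = #(B.filter (LightExpensive ε p w)) * ε * (ε * (1 - labelW ε p w T h)) := by ring
      _ ≤ 1 * (ε * (1 - labelW ε p w T h)) := by gcongr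
      _ = _ := one_mul _
  linarith

lemma Slack.sum_le_of_forall_not_heavy {m : ℕ} {A : Fin m → Finset ι} (hA : Slack ε w A)
    (j : Fin m) (hj : 3 ≤ #(A j)) (hlight : ∀ i ∈ A j, ¬ Heavy ε w i) :
    ∑ i ∈ A j, w i ≤ 1 - ε ^ 3 := by
  rcases hA j hj with ⟨⟨-, h⟩, -⟩ | ⟨⟨h, hh, hheavy, -⟩, -⟩
  · exact h
  · exact absurd hheavy (hlight h hh)

variable {H J : Finset ι}

lemma isGoodKnapsack_self_of_card_lt_three (hε : 0 < ε) (hε9 : ε ≤ 1 / 9) (hJ : #J < 3)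
    (hHJ : ∀ i, i ∈ H ↔ i ∈ J ∧ Heavy ε w i ∧ 3 ≤ #J) (hJw : ∑ i ∈ J, w i ≤ 1)
    (hJp : 2 / 3 - 2 * ε ≤ ∑ i ∈ J, p i) : IsGoodKnapsack ε p w T H J := by
  refine ⟨fun _ => hJw, fun h => absurd h hJ.not_ge, hHJ, ?_⟩
  have hcard : (#(J.filter (LightExpensive ε p w)) : ℝ) ≤ 2 := by
    exact_mod_cast (card_filter_le J _).trans (by omega)
  have := sum_sub_le_sum_roundedProfit (p := p) (w := w) hε J
  nlinarith

lemma exists_isGoodKnapsack_subset_of_three_le (hε : 0 < ε) (hε9 : ε ≤ 1 / 9)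
    (hT : ∀ t ∈ T, Heavy ε w t) (hJ : 3 ≤ #J) (hp0 : ∀ i ∈ J, 0 ≤ p i)
    (hw0 : ∀ i ∈ J, 0 ≤ w i) (hpos : ∀ i ∈ J, LightExpensive ε p w i → 0 < w i)
    (hH : #H ≤ 1) (hHJ : ∀ i, i ∈ H ↔ i ∈ J ∧ Heavy ε w i ∧ 3 ≤ #J)
    (hJp : 2 / 3 - 2 * ε ≤ ∑ i ∈ J, p i)
    (hlight : (∀ i ∈ J, ¬ Heavy ε w i) → ∑ i ∈ J, w i ≤ 1 - ε ^ 3)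
    (hheavy : ∀ h ∈ J, Heavy ε w h →
      (TSet ε p w T h).Nonempty ∧ ∑ i ∈ J, w i - w h ≤ (1 - ε) * (1 - labelW ε p w T h)) :
    ∃ B ⊆ J, IsGoodKnapsack ε p w T H B := by
  obtain ⟨B, hBJ, hB3, hNB, hBp, hk⟩ := exists_profitable_subset (w := w) hε hε9 hp0 hJ hJp
  have hheavyB : ∀ i, Heavy ε w i → (i ∈ B ↔ i ∈ J) := fun i hi =>
    ⟨fun h => hBJ h, fun h => hNB i h fun hie => hie.1 hi⟩
  have hposB : ∀ i ∈ B, LightExpensive ε p w i → 0 < w i := fun i hi => hpos i (hBJ hi)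
  have hk' : #(B.filter (LightExpensive ε p w)) * ε ≤ 1 := by linarith
  refine ⟨B, hBJ, fun h => by omega, fun _ => ?_, fun i => ?_, ?_⟩
  · by_cases hJh : ∃ h ∈ J, Heavy ε w h
    · obtain ⟨h, hhJ, hh⟩ := hJh
      have hhH : h ∈ H := (hHJ h).mpr ⟨hhJ, hh, hJ⟩
      have hHh : H = {h} := eq_singleton_iff_unique_mem.mpr
        ⟨hhH, fun x hx => card_le_one.mp hH x hx h hhH⟩
      obtain ⟨hne, hJw⟩ := hheavy h hhJ hh
      rw [hHh, sum_singleton, sum_singleton]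
      exact sum_roundedWeight_le_of_heavy hε (by linarith) hBJ ((hheavyB h hh).mpr hhJ) hh hw0
        hposB hk' hne hJw
    · replace hJh : ∀ i ∈ J, ¬ Heavy ε w i := fun i hi hh => hJh ⟨i, hi, hh⟩
      have hHe : H = ∅ := eq_empty_of_forall_notMem fun i hi =>
        hJh i ((hHJ i).mp hi).1 ((hHJ i).mp hi).2.1
      rw [hHe, sum_empty, sum_empty, sub_zero, add_zero]
      exact sum_roundedWeight_le_of_light hε hT hposB hk'
        ((sum_le_sum_of_subset_of_nonneg hBJ fun i hi _ => hw0 i hi).trans (hlight hJh))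
  · rw [hHJ]
    by_cases hi : Heavy ε w i
    · rw [hheavyB i hi]
      exact and_congr_right fun _ => and_congr_right fun _ => iff_of_true hJ hB3
    · simp [hi]
  · have := sum_sub_le_sum_roundedProfit (p := p) (w := w) hε B
    nlinarith

lemma exists_isGoodKnapsack_subset (hε : 0 < ε) (hε9 : ε ≤ 1 / 9) (hT : ∀ t ∈ T, Heavy ε w t)
    (hp0 : ∀ i ∈ J, 0 ≤ p i) (hw0 : ∀ i ∈ J, 0 ≤ w i)
    (hpos : ∀ i ∈ J, LightExpensive ε p w i → 0 < w i) (hH : #H ≤ 1)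
    (hHJ : ∀ i, i ∈ H ↔ i ∈ J ∧ Heavy ε w i ∧ 3 ≤ #J) (hJw : ∑ i ∈ J, w i ≤ 1)
    (hJp : 2 / 3 - 2 * ε ≤ ∑ i ∈ J, p i)
    (hlight : 3 ≤ #J → (∀ i ∈ J, ¬ Heavy ε w i) → ∑ i ∈ J, w i ≤ 1 - ε ^ 3)
    (hheavy : ∀ h ∈ J, Heavy ε w h → 3 ≤ #J →
      (TSet ε p w T h).Nonempty ∧ ∑ i ∈ J, w i - w h ≤ (1 - ε) * (1 - labelW ε p w T h)) :
    ∃ B ⊆ J, IsGoodKnapsack ε p w T H B := by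
  rcases lt_or_ge #J 3 with hJ | hJ
  · exact ⟨J, subset_rfl, isGoodKnapsack_self_of_card_lt_three hε hε9 hJ hHJ hJw hJp⟩
  · exact exists_isGoodKnapsack_subset_of_three_le hε hε9 hT hJ hp0 hw0 hpos hH hHJ hJp
      (hlight hJ) fun h hhJ hh => hheavy h hhJ hh hJ

end Construction

/-- Lemma 4.10: given the guessed critical heavy items `H* j` and a slack solution
`J` of value at least `2/3 - 2ε` whose critical heavy items are exactly the `H* j`
and which satisfies the profile inequality with label weights, there is a feasible
solution of value at least `2/3 - 3ε` with the same critical heavy items, whose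
label-weight rounding is feasible in every knapsack with at least three items, and
in which, within each type, every critical light-expensive item is at least as
heavy as every non-critical light-expensive item. -/
theorem stmt9 : ∃ ε₀ : ℝ, 0 < ε₀ ∧
    ∀ ε : ℝ, 0 < ε → ε ≤ ε₀ →
    ∀ (ι : Type u) (p w : ι → ℝ) (I : Finset ι) (m : ℕ)
      (T : Finset ι) (Hstar : Fin m → Finset ι) (J : Fin m → Finset ι),
      (∀ i ∈ I, 0 ≤ p i) → (∀ i ∈ I, 0 ≤ w i) →
      (∀ i ∈ I, w i = 0 → p i = 0) →
      (∀ i ∈ I, p i < 2/3 - 6 * ε) →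
      (∀ i ∈ I, Heavy ε w i → Expensive ε p i) →
      T ⊆ I → (∀ t ∈ T, Heavy ε w t) →
      (∀ j, ∀ h ∈ Hstar j, Heavy ε w h) → (∀ j, (Hstar j).card ≤ 1) →
      (∀ j, J j ⊆ I) → (∀ j j', j ≠ j' → Disjoint (J j) (J j')) →
      (∀ j, ∑ i ∈ J j, w i ≤ 1) →
      Slack ε w J →
      (∀ j, 2/3 - 2 * ε ≤ ∑ i ∈ J j, p i) →
      (∀ j : Fin m, ∀ h ∈ J j, Heavy ε w h → 3 ≤ (J j).card →
        (TSet ε p w T h).Nonempty ∧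
        (∑ i ∈ J j, w i) - w h ≤ (1 - ε) * (1 - labelW ε p w T h)) →
      (∀ j : Fin m, ∀ i : ι,
        i ∈ Hstar j ↔ (i ∈ J j ∧ Heavy ε w i ∧ 3 ≤ (J j).card)) →
      ∃ A : Fin m → Finset ι,
        (∀ j, A j ⊆ I) ∧ (∀ j j', j ≠ j' → Disjoint (A j) (A j')) ∧
        (∀ j, ∑ i ∈ A j, w i ≤ 1) ∧
        (∀ j, 2/3 - 3 * ε ≤ ∑ i ∈ A j, p i) ∧
        (∀ j : Fin m, ∀ i : ι,
          i ∈ Hstar j ↔ (i ∈ A j ∧ Heavy ε w i ∧ 3 ≤ (A j).card)) ∧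
        (∀ j : Fin m, 3 ≤ (A j).card →
          (∑ i ∈ A j, w i)
            - (∑ i ∈ (A j).filter (fun i => ¬ Heavy ε w i ∧ Expensive ε p i), w i)
            + (∑ i ∈ (A j).filter (fun i => ¬ Heavy ε w i ∧ Expensive ε p i),
                labelWLight ε w T i)
            - (∑ i ∈ Hstar j, w i)
            + (∑ i ∈ Hstar j, labelW ε p w T i) ≤ 1) ∧
        (¬ ∃ e e', (¬ Heavy ε w e ∧ Expensive ε p e) ∧ Critical ε p w A e ∧
          e' ∈ I ∧ (¬ Heavy ε w e' ∧ Expensive ε p e') ∧ ¬ Critical ε p w A e' ∧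
          SameTypeLight ε p w T e e' ∧ w e < w e') := by
  refine ⟨1 / 9, by norm_num, fun ε hε hε9 ι p w I m T Hstar J hp0 hw0 hwp0 _ _ _ hT _ hHcard
    hJI hJdisj hJw hslack hJp hJlab hJH => ?_⟩
  have hpos : ∀ i ∈ I, LightExpensive ε p w i → 0 < w i := fun i hi hie =>
    (hw0 i hi).lt_of_ne fun h0 => by linarith [hwp0 i hi h0.symm, show ε ≤ p i from hie.2]
  have hHlab : ∀ j, ∀ h ∈ Hstar j, w h ≤ labelW ε p w T h := fun j h hh =>
    have ⟨hhJ, hheavy, h3⟩ := (hJH j h).mp hh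
    le_labelW (hJlab j h hhJ hheavy h3).1
  choose B hBJ hB using fun j => exists_isGoodKnapsack_subset hε hε9 hT
    (fun i hi => hp0 i (hJI j hi)) (fun i hi => hw0 i (hJI j hi))
    (fun i hi => hpos i (hJI j hi)) (hHcard j) (hJH j) (hJw j) (hJp j)
    (hslack.sum_le_of_forall_not_heavy j) (hJlab j)
  have hBgood : IsGoodSolution ε p w T I Hstar B :=
    ⟨fun j => (hBJ j).trans (hJI j), fun j j' h => (hJdisj j j' h).mono (hBJ j) (hBJ j'), hB⟩
  obtain ⟨A, hA, hmax⟩ := Set.exists_max_image _ (fun A => ∑ j, criticalLightWeight ε p w (A j))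
    (IsGoodSolution.setOf_finite ε p w T I Hstar) ⟨B, hBgood⟩
  refine ⟨A, hA.subset, hA.disjoint,
    fun j => (hA.knapsack j).sum_weight_le hε (fun i hi => hpos i (hA.subset j hi)) (hHlab j),
    fun j => (hA.knapsack j).le_sum_profit hε, fun j => (hA.knapsack j).mem_iff,
    fun j h3 => ?_, hA.not_exists_critical_lighter hmax⟩
  rw [← sum_roundedWeight_eq]
  exact (hA.knapsack j).sum_roundedWeight_le h3
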